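/- Let V be a finite set with |V| ≥ 2, f : Finset V → ℝ a nonnegative symmetric submodular function with f(∅) = 0, and H a tree on vertex set V with edge weights w_H. For an edge e = st of H, let U_s(e) denote the vertex set of the component of H − e containing s. Assume: (i) w_H(e) = f(U_s(e)) for every edge e = st of H (well-defined since f is symmetric); and (ii) for all distinct s, t ∈ V and every S ⊆ V with s ∈ S and t ∉ S, the minimum of w_H(e) over the edges e of the unique s–t path in H is at most f(S) (i.e., H is a Gomory–Hu tree of f). Let M be a matroid on V of rank k ≥ 2, let I' = {X' ⊆ E(H) : the components of H − X' admit a transversal independent in M}, and let C ∈ I' with |C| = k − 1 minimize Σ_{e ∈ C} w_H(e) over all members of I' of size k − 1. Then the partition P of V into the vertex sets of the components of H − C is feasible (there is a basis B of M with exactly one element in each class of P), and for every feasible partition P* of V, Σ_{X ∈ P} f(X) ≤ (2 − 2/k) · Σ_{X ∈ P*} f(X). -/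

import Mathlib

/-!
Two estimates meet at `w(C)`. Since `f ≥ 0` is submodular, `f(A ∩ B) ≤ f(A) + f(B)`. A
component of `H - C` is the intersection of the sides of the edges of `C` it touches, each side
has `f`-value equal to the weight of its edge by (i), and every edge of `C` touches exactly two
components; so the components of `H - C` have total value at most `2 w(C)` (for the empty
intersection, `f(V) = f(∅) = 0` by symmetry).

Conversely, let `P*` be feasible with basis `B` and let `X₀` be a class of largest value. Taking
the classes `X ≠ X₀` one at a time, the tree path from the vertex of `B` in `X` to the vertex of
`B` representing its current component leaves `X`, so by (ii) it has an edge of weight at most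
`f(X)`; cutting it makes `B` a transversal of one more component. The result is a member of `I'`
of size `k - 1` and weight at most `f(P*) - f(X₀) ≤ (1 - 1/k) f(P*)`, which bounds `w(C)`.
Feasibility of the components of `H - C` holds because deleting `j` edges from a tree leaves
exactly `j + 1` components.
-/
open Finset
open scoped Classical

variable {V : Type*} [Fintype V] [DecidableEq V]

/-- The vertex set of the connected component of `G` containing `u`. -/
noncomputable def compOf (G : SimpleGraph V) (u : V) : Finset V :=
  Finset.univ.filter fun x => G.Reachable u x

/-- The family of vertex sets of the connected components of `G`. -/
noncomputable def comps (G : SimpleGraph V) : Finset (Finset V) :=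
  Finset.univ.image fun v => compOf G v

/-- `P` is a partition of the finite ground set into nonempty parts. -/
def IsPartition (P : Finset (Finset V)) : Prop :=
  (∀ X ∈ P, X.Nonempty) ∧
  (∀ X ∈ P, ∀ Y ∈ P, X ≠ Y → Disjoint X Y) ∧
  P.sup id = Finset.univ

/-- `P` is a feasible partition for the rank-`k` matroid given by `Indep`. -/
def Feasible (Indep : Finset V → Prop) (k : ℕ) (P : Finset (Finset V)) : Prop :=
  IsPartition P ∧ ∃ B : Finset V, Indep B ∧ B.card = k ∧ ∀ X ∈ P, (B ∩ X).card = 1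

/-- `X'` is a set of edges of `H` such that the connected components of `H - X'`
admit a transversal that is independent in the matroid given by `Indep`. -/
def TreeCutIndep (Indep : Finset V → Prop) (H : SimpleGraph V)
    (X' : Finset (Sym2 V)) : Prop :=
  (X' : Set (Sym2 V)) ⊆ H.edgeSet ∧
  ∃ T : Finset V, Indep T ∧
    ∀ c : (H.deleteEdges (X' : Set (Sym2 V))).ConnectedComponent,
      ∃! v : V, v ∈ T ∧ (H.deleteEdges (X' : Set (Sym2 V))).connectedComponentMk v = c

namespace SimpleGraph

section

omit [Fintype V] [DecidableEq V]

variable {G : SimpleGraph V}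

lemma Walk.exists_reachable_of_not_reachable_deleteEdges {s : Set (Sym2 V)} {u v : V}
    (q : G.Walk u v) (h : ¬ (G.deleteEdges s).Reachable u v) :
    ∃ a b, s(a, b) ∈ s ∧ s(a, b) ∈ q.edges ∧ (G.deleteEdges s).Reachable u a := by
  induction q with
  | nil => exact absurd .rfl h
  | @cons x y z hadj q ih =>
    by_cases he : s(x, y) ∈ s
    · exact ⟨x, y, he, by simp, .rfl⟩
    · have hxy : (G.deleteEdges s).Reachable x y := (deleteEdges_adj.mpr ⟨hadj, he⟩).reachable
      obtain ⟨a, b, hab, habq, hya⟩ := ih fun hyz => h (hxy.trans hyz)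
      exact ⟨a, b, hab, by simp [habq], hxy.trans hya⟩

lemma Reachable.reachable_deleteEdges_left_or_right {x y u v : V} (h : G.Reachable u v)
    (h' : ¬ (G.deleteEdges {s(x, y)}).Reachable u v) :
    (G.deleteEdges {s(x, y)}).Reachable u x ∨ (G.deleteEdges {s(x, y)}).Reachable u y := by
  obtain ⟨q⟩ := h
  obtain ⟨a, b, hab, -, hua⟩ := q.exists_reachable_of_not_reachable_deleteEdges h'
  rcases Sym2.eq_iff.mp (Set.mem_singleton_iff.mp hab) with ⟨rfl, -⟩ | ⟨rfl, -⟩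
  · exact .inl hua
  · exact .inr hua

lemma IsAcyclic.reachable_deleteEdges_iff (hG : G.IsAcyclic) {s : Set (Sym2 V)} {u v : V}
    {p : G.Walk u v} (hp : p.IsPath) :
    (G.deleteEdges s).Reachable u v ↔ ∀ e ∈ p.edges, e ∉ s := by
  refine ⟨fun ⟨q⟩ e he hes => ?_, fun h => ⟨p.toDeleteEdges s h⟩⟩
  let q' : G.Path u v :=
    ⟨q.toPath.1.mapLe (deleteEdges_le s), (Walk.isPath_mapLe _).mpr q.toPath.2⟩
  have hpq : p = q'.1 :=
    congrArg Subtype.val (@Subsingleton.elim _ (hG.subsingleton_path u v) ⟨p, hp⟩ q')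
  rw [hpq, Walk.edges_mapLe_eq_edges] at he
  have := q.toPath.1.edges_subset_edgeSet he
  rw [edgeSet_deleteEdges] at this
  exact this.2 hes

lemma IsAcyclic.not_reachable_deleteEdges (hG : G.IsAcyclic) {s : Set (Sym2 V)} {x y : V}
    (hxy : G.Adj x y) (hs : s(x, y) ∈ s) : ¬ (G.deleteEdges s).Reachable x y :=
  fun h => isAcyclic_iff_forall_adj_isBridge.mp hG hxy
    (h.mono (deleteEdges_anti (Set.singleton_subset_iff.mpr hs)))

variable {T : Finset V}

def IsTransversal (G : SimpleGraph V) (T : Finset V) : Prop :=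
  ∀ v, ∃! t, t ∈ T ∧ G.Reachable v t

lemma IsTransversal.eq_of_reachable (hT : G.IsTransversal T) {t₁ t₂ : V} (h₁ : t₁ ∈ T)
    (h₂ : t₂ ∈ T) (h : G.Reachable t₁ t₂) : t₁ = t₂ :=
  (hT t₁).unique ⟨h₁, .rfl⟩ ⟨h₂, h⟩

lemma isTransversal_iff_existsUnique_connectedComponentMk :
    G.IsTransversal T ↔
      ∀ c : G.ConnectedComponent, ∃! v, v ∈ T ∧ G.connectedComponentMk v = c := by
  refine ⟨fun hT c => ?_, fun hT v => ?_⟩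
  · induction c using ConnectedComponent.ind with | h v => ?_
    simpa only [ConnectedComponent.eq, reachable_comm] using hT v
  · simpa only [ConnectedComponent.eq, reachable_comm] using hT (G.connectedComponentMk v)

lemma IsTransversal.natCard_connectedComponent (hT : G.IsTransversal T) :
    Nat.card G.ConnectedComponent = T.card := by
  rw [← Nat.card_eq_finsetCard]
  refine (Nat.card_eq_of_bijective (fun t : T => G.connectedComponentMk t)
    ⟨?_, fun c => ?_⟩).symm
  · rintro ⟨t₁, h₁⟩ ⟨t₂, h₂⟩ h
    exact Subtype.ext (hT.eq_of_reachable h₁ h₂ (ConnectedComponent.exact h))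
  · induction c using ConnectedComponent.ind with | h v => ?_
    obtain ⟨t, ⟨ht, hvt⟩, -⟩ := hT v
    exact ⟨⟨t, ht⟩, ConnectedComponent.sound hvt.symm⟩

lemma Connected.isTransversal_singleton (hG : G.Connected) (v : V) : G.IsTransversal {v} :=
  fun u => ⟨v, ⟨mem_singleton_self v, hG u v⟩, fun _ h => mem_singleton.mp h.1⟩

end

section

omit [Fintype V]

variable {G : SimpleGraph V} {T : Finset V}

lemma IsTransversal.insert_deleteEdges (hT : G.IsTransversal T) {x y b t : V} (ht : t ∈ T)
    (hbt : G.Reachable b t) (hcut : ¬ (G.deleteEdges {s(x, y)}).Reachable b t) :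
    (G.deleteEdges {s(x, y)}).IsTransversal (insert b T) := by
  set G' := G.deleteEdges {s(x, y)}
  have hle : G' ≤ G := deleteEdges_le _
  have hside : ∀ v, G'.Reachable v x ∨ G'.Reachable v y →
      G'.Reachable v b ∨ G'.Reachable v t := by
    have hb := hbt.reachable_deleteEdges_left_or_right hcut
    have ht' := hbt.symm.reachable_deleteEdges_left_or_right fun h => hcut h.symm
    rintro v (hv | hv) <;> rcases hb with hb | hb <;> rcases ht' with ht' | ht' <;>
      first
      | exact .inl (hv.trans hb.symm)
      | exact .inr (hv.trans ht'.symm)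
      | exact absurd (hb.trans ht'.symm) hcut
  have hbT : ∀ t' ∈ T, ¬ G'.Reachable b t' := fun t' ht' h =>
    hcut (by rwa [hT.eq_of_reachable ht ht' (hbt.symm.trans (h.mono hle))])
  intro v
  refine existsUnique_of_exists_of_unique ?_ ?_
  · obtain ⟨s, ⟨hs, hvs⟩, -⟩ := hT v
    by_cases h : G'.Reachable v s
    · exact ⟨s, mem_insert_of_mem hs, h⟩
    rcases hside v (hvs.reachable_deleteEdges_left_or_right h) with h | h
    · exact ⟨b, mem_insert_self b T, h⟩
    · exact ⟨t, mem_insert_of_mem ht, h⟩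
  · rintro t₁ t₂ ⟨h₁, hv₁⟩ ⟨h₂, hv₂⟩
    rcases mem_insert.mp h₁ with rfl | h₁T <;> rcases mem_insert.mp h₂ with rfl | h₂T
    · rfl
    · exact absurd (hv₁.symm.trans hv₂) (hbT _ h₂T)
    · exact absurd (hv₂.symm.trans hv₁) (hbT _ h₁T)
    · exact hT.eq_of_reachable h₁T h₂T ((hv₁.symm.trans hv₂).mono hle)

lemma IsTree.exists_isTransversal_deleteEdges {H : SimpleGraph V} (hH : H.IsTree)
    {D : Finset (Sym2 V)} (hD : (D : Set (Sym2 V)) ⊆ H.edgeSet) :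
    ∃ T : Finset V, (H.deleteEdges D).IsTransversal T ∧ T.card = D.card + 1 := by
  induction D using Finset.induction_on with
  | empty =>
    obtain ⟨v⟩ := hH.connected.nonempty
    exact ⟨{v}, by simpa using hH.connected.isTransversal_singleton v, rfl⟩
  | @insert e D he ih =>
    rw [coe_insert, Set.insert_subset_iff] at hD
    obtain ⟨T, hT, hcard⟩ := ih hD.2
    induction e using Sym2.ind with | h x y => ?_
    have hxy : (H.deleteEdges D).Adj x y := deleteEdges_adj.mpr ⟨hD.1, by simpa using he⟩
    have hsep : ¬ ((H.deleteEdges D).deleteEdges {s(x, y)}).Reachable x y := by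
      rw [deleteEdges_deleteEdges]
      exact hH.isAcyclic.not_reachable_deleteEdges hD.1 (Set.mem_union_right _ rfl)
    rw [coe_insert, ← Set.union_singleton, ← deleteEdges_deleteEdges]
    obtain ⟨t, ⟨ht, hxt⟩, -⟩ := hT x
    obtain ⟨b, hbt, hcut⟩ : ∃ b, (H.deleteEdges D).Reachable b t ∧
        ¬ ((H.deleteEdges D).deleteEdges {s(x, y)}).Reachable b t := by
      by_cases h : ((H.deleteEdges D).deleteEdges {s(x, y)}).Reachable x t
      · exact ⟨y, hxy.symm.reachable.trans hxt, fun h' => hsep (h.trans h'.symm)⟩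
      · exact ⟨x, hxt, h⟩
    have hbT : b ∉ T := fun hb => hcut (hT.eq_of_reachable hb ht hbt ▸ .rfl)
    refine ⟨insert b T, hT.insert_deleteEdges ht hbt hcut, ?_⟩
    rw [card_insert_of_notMem hbT, hcard, card_insert_of_notMem he]

lemma IsTree.natCard_connectedComponent_deleteEdges {H : SimpleGraph V} (hH : H.IsTree)
    {D : Finset (Sym2 V)} (hD : (D : Set (Sym2 V)) ⊆ H.edgeSet) :
    Nat.card (H.deleteEdges D).ConnectedComponent = D.card + 1 := by
  obtain ⟨T, hT, hcard⟩ := hH.exists_isTransversal_deleteEdges hD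
  rw [hT.natCard_connectedComponent, hcard]

end

end SimpleGraph

section Components

variable {G : SimpleGraph V} {u v : V}

@[simp]
lemma mem_compOf : v ∈ compOf G u ↔ G.Reachable u v := by
  simp [compOf]

lemma compOf_eq_compOf (h : G.Reachable u v) : compOf G u = compOf G v := by
  ext x
  simp only [mem_compOf]
  exact ⟨h.symm.trans, h.trans⟩

lemma mem_comps {X : Finset V} : X ∈ comps G ↔ ∃ v, compOf G v = X := by
  simp [comps]

lemma compOf_mem_comps (v : V) : compOf G v ∈ comps G :=
  mem_comps.mpr ⟨v, rfl⟩

lemma isPartition_comps (G : SimpleGraph V) : IsPartition (comps G) := by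
  refine ⟨?_, ?_, ?_⟩
  · intro X hX
    obtain ⟨v, rfl⟩ := mem_comps.mp hX
    exact ⟨v, mem_compOf.mpr .rfl⟩
  · intro X hX Y hY hne
    obtain ⟨u, rfl⟩ := mem_comps.mp hX
    obtain ⟨v, rfl⟩ := mem_comps.mp hY
    refine disjoint_left.mpr fun a hu hv => hne ?_
    rw [compOf_eq_compOf (mem_compOf.mp hu), compOf_eq_compOf (mem_compOf.mp hv)]
  · exact eq_univ_of_forall fun a =>
      mem_sup.mpr ⟨compOf G a, compOf_mem_comps a, mem_compOf.mpr .rfl⟩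

lemma SimpleGraph.IsTransversal.card_inter_compOf {T : Finset V} (hT : G.IsTransversal T)
    (v : V) : (T ∩ compOf G v).card = 1 := by
  obtain ⟨t, ⟨ht, hvt⟩, huniq⟩ := hT v
  refine card_eq_one.mpr ⟨t, ext fun a => ?_⟩
  simp only [mem_inter, mem_compOf, mem_singleton]
  exact ⟨fun ha => huniq a ha, by rintro rfl; exact ⟨ht, hvt⟩⟩

lemma SimpleGraph.IsTransversal.feasible_comps {T : Finset V} (hT : G.IsTransversal T)
    {Indep : Finset V → Prop} (hind : Indep T) {k : ℕ} (hcard : T.card = k) :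
    Feasible Indep k (comps G) := by
  refine ⟨isPartition_comps G, T, hind, hcard, fun X hX => ?_⟩
  obtain ⟨v, rfl⟩ := mem_comps.mp hX
  exact hT.card_inter_compOf v

end Components

section Partition

variable {P : Finset (Finset V)} {rep : Finset V → V}

lemma IsPartition.rep_notMem (hP : IsPartition P) (hrep : ∀ X ∈ P, rep X ∈ X) :
    ∀ X ∈ P, ∀ Y ∈ P, X ≠ Y → rep Y ∉ X :=
  fun X hX Y hY hXY hYX => disjoint_left.mp (hP.2.1 X hX Y hY hXY) hYX (hrep Y hY)

lemma IsPartition.image_eq_of_inter_eq_singleton (hP : IsPartition P) {B : Finset V}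
    (hrep : ∀ X ∈ P, B ∩ X = {rep X}) : P.image rep = B := by
  ext b
  refine ⟨fun hb => ?_, fun hb => ?_⟩
  · obtain ⟨X, hX, rfl⟩ := mem_image.mp hb
    exact mem_of_mem_inter_left (hrep X hX ▸ mem_singleton_self (rep X))
  · obtain ⟨X, hX, hbX⟩ := mem_sup.mp (hP.2.2 ▸ mem_univ b)
    have hbBX : b ∈ B ∩ X := mem_inter.mpr ⟨hb, hbX⟩
    rw [hrep X hX, mem_singleton] at hbBX
    exact mem_image.mpr ⟨X, hX, hbBX.symm⟩

lemma Feasible.card_eq {Indep : Finset V → Prop} {k : ℕ} (hP : Feasible Indep k P) :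
    P.card = k := by
  obtain ⟨⟨-, hdisj, hcover⟩, B, -, hBcard, hB⟩ := hP
  have hB_eq : P.biUnion (B ∩ ·) = B := by
    rw [← inter_biUnion, ← sup_eq_biUnion]
    exact (congrArg (B ∩ ·) hcover).trans (inter_univ B)
  rw [← hBcard, ← hB_eq, card_biUnion, sum_congr rfl hB, card_eq_sum_ones]
  exact fun X hX Y hY hXY => (hdisj X hX Y hY hXY).mono inter_subset_right inter_subset_right

end Partition

lemma Finset.sum_erase_le_one_sub_inv_card_mul_sum {ι : Type*} [DecidableEq ι] {s : Finset ι}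
    {g : ι → ℝ} {a : ι} (ha : a ∈ s) (hmax : ∀ x ∈ s, g x ≤ g a) :
    ∑ x ∈ s.erase a, g x ≤ (1 - 1 / s.card) * ∑ x ∈ s, g x := by
  have hcard : (0 : ℝ) < s.card := by exact_mod_cast card_pos.mpr ⟨a, ha⟩
  have hsum : ∑ x ∈ s, g x ≤ s.card * g a := by simpa using sum_le_card_nsmul s g (g a) hmax
  have hmean : (∑ x ∈ s, g x) / s.card ≤ g a := (div_le_iff₀ hcard).mpr (by linarith)
  calc ∑ x ∈ s.erase a, g x = ∑ x ∈ s, g x - g a := by linarith [add_sum_erase s g ha]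
    _ ≤ ∑ x ∈ s, g x - (∑ x ∈ s, g x) / s.card := by linarith
    _ = (1 - 1 / s.card) * ∑ x ∈ s, g x := by ring

lemma submodular_inf_le_sum {ι : Type*} [DecidableEq ι] {f : Finset V → ℝ}
    (h_nonneg : ∀ A, 0 ≤ f A) (h_submod : ∀ A B, f (A ∪ B) + f (A ∩ B) ≤ f A + f B)
    (h_univ : f univ = 0) (s : Finset ι) (g : ι → Finset V) :
    f (s.inf g) ≤ ∑ i ∈ s, f (g i) := by
  induction s using Finset.induction_on with
  | empty => simp [h_univ]
  | @insert i s hi ih =>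
    rw [inf_insert, sum_insert hi, inf_eq_inter]
    linarith [h_submod (g i) (s.inf g), h_nonneg (g i ∪ s.inf g)]

def edgesMeeting (D : Finset (Sym2 V)) (X : Finset V) : Finset (Sym2 V) :=
  D.filter fun e => ∃ a ∈ X, a ∈ e

lemma sum_comps_sum_edgesMeeting {G : SimpleGraph V} {D : Finset (Sym2 V)}
    (hD : ∀ x y, s(x, y) ∈ D → ¬ G.Reachable x y) (w : Sym2 V → ℝ) :
    ∑ X ∈ comps G, ∑ e ∈ edgesMeeting D X, w e = 2 * ∑ e ∈ D, w e := by
  simp only [edgesMeeting, sum_filter]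
  rw [sum_comm, mul_sum]
  refine sum_congr rfl fun e he => ?_
  induction e using Sym2.ind with | h x y => ?_
  have hne : compOf G x ≠ compOf G y := fun h =>
    hD x y he (mem_compOf.mp (h ▸ mem_compOf.mpr .rfl))
  have hmeet : (comps G).filter (fun X => ∃ a ∈ X, a ∈ s(x, y)) =
      {compOf G x, compOf G y} := by
    ext X
    simp only [mem_filter, mem_comps, mem_insert, mem_singleton, Sym2.mem_iff]
    constructor
    · rintro ⟨⟨u, rfl⟩, a, hua, rfl | rfl⟩
      · exact .inl (compOf_eq_compOf (mem_compOf.mp hua))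
      · exact .inr (compOf_eq_compOf (mem_compOf.mp hua))
    · rintro (rfl | rfl)
      · exact ⟨⟨x, rfl⟩, x, mem_compOf.mpr .rfl, .inl rfl⟩
      · exact ⟨⟨y, rfl⟩, y, mem_compOf.mpr .rfl, .inr rfl⟩
  rw [← sum_filter, hmeet, sum_pair hne]
  ring

section GomoryHu

variable {H : SimpleGraph V} {f : Finset V → ℝ} {wH : Sym2 V → ℝ}

lemma SimpleGraph.IsTree.compOf_deleteEdges_eq_inf (hH : H.IsTree) (D : Finset (Sym2 V))
    (v : V) :
    compOf (H.deleteEdges D) v =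
      (edgesMeeting D (compOf (H.deleteEdges D) v)).inf fun e => compOf (H.deleteEdges {e}) v := by
  refine le_antisymm (Finset.le_inf fun e he a ha => ?_) fun u hu => ?_
  · have heD : ({e} : Set (Sym2 V)) ⊆ D := by simpa using (mem_filter.mp he).1
    exact mem_compOf.mpr ((mem_compOf.mp ha).mono (SimpleGraph.deleteEdges_anti heD))
  · rw [mem_compOf]
    by_contra hvu
    obtain ⟨p, hp, -⟩ := hH.existsUnique_path v u
    obtain ⟨a, b, hab, habp, hva⟩ := p.exists_reachable_of_not_reachable_deleteEdges hvu
    have hmeet : s(a, b) ∈ edgesMeeting D (compOf (H.deleteEdges D) v) :=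
      mem_filter.mpr ⟨by simpa using hab, a, mem_compOf.mpr hva, Sym2.mem_mk_left a b⟩
    have hu' : u ∈ compOf (H.deleteEdges {s(a, b)}) v :=
      Finset.inf_le (f := fun e => compOf (H.deleteEdges {e}) v) hmeet hu
    rw [mem_compOf, hH.isAcyclic.reachable_deleteEdges_iff hp] at hu'
    exact hu' _ habp rfl

lemma SimpleGraph.IsTree.apply_compOf_deleteEdges_le (hH : H.IsTree) {D : Finset (Sym2 V)}
    (hD : (D : Set (Sym2 V)) ⊆ H.edgeSet) (h_nonneg : ∀ A, 0 ≤ f A)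
    (h_submod : ∀ A B, f (A ∪ B) + f (A ∩ B) ≤ f A + f B) (h_univ : f univ = 0)
    (h_weight : ∀ u v : V, H.Adj u v →
      wH s(u, v) = f (compOf (H.deleteEdges ({s(u, v)} : Set (Sym2 V))) u)) (v : V) :
    f (compOf (H.deleteEdges D) v) ≤
      ∑ e ∈ edgesMeeting D (compOf (H.deleteEdges D) v), wH e := by
  set X := compOf (H.deleteEdges D) v
  calc f X = f ((edgesMeeting D X).inf fun e => compOf (H.deleteEdges {e}) v) :=
        congrArg f (hH.compOf_deleteEdges_eq_inf D v)
    _ ≤ ∑ e ∈ edgesMeeting D X, f (compOf (H.deleteEdges {e}) v) :=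
        submodular_inf_le_sum h_nonneg h_submod h_univ _ _
    _ = ∑ e ∈ edgesMeeting D X, wH e := sum_congr rfl fun e he => ?_
  obtain ⟨heD, a, haX, hae⟩ := mem_filter.mp he
  obtain ⟨b, rfl⟩ := Sym2.mem_iff_exists.mp hae
  have hva : (H.deleteEdges {s(a, b)}).Reachable v a :=
    (mem_compOf.mp haX).mono (SimpleGraph.deleteEdges_anti (by simpa using heD))
  rw [compOf_eq_compOf hva, h_weight a b (hD heD)]

lemma SimpleGraph.IsTree.sum_comps_deleteEdges_le (hH : H.IsTree) {D : Finset (Sym2 V)}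
    (hD : (D : Set (Sym2 V)) ⊆ H.edgeSet) (h_nonneg : ∀ A, 0 ≤ f A)
    (h_submod : ∀ A B, f (A ∪ B) + f (A ∩ B) ≤ f A + f B) (h_univ : f univ = 0)
    (h_weight : ∀ u v : V, H.Adj u v →
      wH s(u, v) = f (compOf (H.deleteEdges ({s(u, v)} : Set (Sym2 V))) u)) :
    ∑ X ∈ comps (H.deleteEdges D), f X ≤ 2 * ∑ e ∈ D, wH e := by
  rw [← sum_comps_sum_edgesMeeting fun x y hxy =>
    hH.isAcyclic.not_reachable_deleteEdges (hD hxy) (mem_coe.mpr hxy)]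
  refine sum_le_sum fun X hX => ?_
  obtain ⟨v, rfl⟩ := mem_comps.mp hX
  exact hH.apply_compOf_deleteEdges_le hD h_nonneg h_submod h_univ h_weight v

def PathMinLeCut (H : SimpleGraph V) (wH : Sym2 V → ℝ) (f : Finset V → ℝ) : Prop :=
  ∀ a b : V, a ≠ b → ∀ S : Finset V, a ∈ S → b ∉ S →
    ∀ p : H.Walk a b, p.IsPath → ∃ e ∈ p.edges, wH e ≤ f S

omit [Fintype V] in
lemma SimpleGraph.IsTree.exists_isTransversal_image_of_pathMinLeCut (hH : H.IsTree)
    (hGH : PathMinLeCut H wH f) {P : Finset (Finset V)} {rep : Finset V → V}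
    (hrep : ∀ X ∈ P, rep X ∈ X) (hsep : ∀ X ∈ P, ∀ Y ∈ P, X ≠ Y → rep Y ∉ X)
    {X₀ : Finset V} (hX₀ : X₀ ∈ P) {Q : Finset (Finset V)} (hQ : Q ⊆ P.erase X₀) :
    ∃ D : Finset (Sym2 V), (D : Set (Sym2 V)) ⊆ H.edgeSet ∧ D.card = Q.card ∧
      (H.deleteEdges D).IsTransversal ((insert X₀ Q).image rep) ∧
      ∑ e ∈ D, wH e ≤ ∑ X ∈ Q, f X := by
  induction Q using Finset.induction_on with
  | empty =>
    refine ⟨∅, by simp, rfl, ?_, by simp⟩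
    simpa using hH.connected.isTransversal_singleton (rep X₀)
  | @insert X Q hXQ ih =>
    obtain ⟨hXX₀, hXP⟩ := mem_erase.mp (hQ (mem_insert_self X Q))
    obtain ⟨D, hDsub, hDcard, hD, hDw⟩ := ih ((subset_insert X Q).trans hQ)
    obtain ⟨l, ⟨hl, hXl⟩, -⟩ := hD (rep X)
    obtain ⟨Y, hY, rfl⟩ := mem_image.mp hl
    have hYP : Y ∈ P := by
      rcases mem_insert.mp hY with rfl | hY
      exacts [hX₀, mem_of_mem_erase (hQ (mem_insert_of_mem hY))]
    have hXY : X ≠ Y := by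
      rintro rfl
      rcases mem_insert.mp hY with rfl | hY
      exacts [hXX₀ rfl, hXQ hY]
    have hYX := hsep X hXP Y hYP hXY
    have hrepXY : rep X ≠ rep Y := fun h => hYX (h ▸ hrep X hXP)
    obtain ⟨p, hp, -⟩ := hH.existsUnique_path (rep X) (rep Y)
    obtain ⟨e, hep, hwe⟩ := hGH _ _ hrepXY X (hrep X hXP) hYX p hp
    have heD : e ∉ D := fun h =>
      (hH.isAcyclic.reachable_deleteEdges_iff hp).mp hXl e hep (mem_coe.mpr h)
    induction e using Sym2.ind with | h x y => ?_
    have hcut : ¬ ((H.deleteEdges D).deleteEdges {s(x, y)}).Reachable (rep X) (rep Y) := by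
      rw [deleteEdges_deleteEdges, hH.isAcyclic.reachable_deleteEdges_iff hp]
      exact fun h => h _ hep (Set.mem_union_right _ rfl)
    refine ⟨insert s(x, y) D, ?_, ?_, ?_, ?_⟩
    · rw [coe_insert]
      exact Set.insert_subset (p.edges_subset_edgeSet hep) hDsub
    · rw [card_insert_of_notMem heD, card_insert_of_notMem hXQ, hDcard]
    · rw [Finset.insert_comm, image_insert, coe_insert, ← Set.union_singleton,
        ← deleteEdges_deleteEdges]
      exact hD.insert_deleteEdges hl hXl hcut
    · rw [sum_insert heD, sum_insert hXQ]
      linarith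

lemma Feasible.exists_treeCutIndep_sum_le (hH : H.IsTree) (hGH : PathMinLeCut H wH f)
    {Indep : Finset V → Prop} {k : ℕ} {P : Finset (Finset V)} (hP : Feasible Indep k P)
    {X₀ : Finset V} (hX₀ : X₀ ∈ P) :
    ∃ D : Finset (Sym2 V), TreeCutIndep Indep H D ∧ D.card = k - 1 ∧
      ∑ e ∈ D, wH e ≤ ∑ X ∈ P.erase X₀, f X := by
  have hPcard := hP.card_eq
  obtain ⟨hpart, B, hBind, -, hB⟩ := hP
  have : Nonempty V := hH.connected.nonempty
  choose! rep hrep using fun X hX => card_eq_one.mp (hB X hX)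
  have hmem : ∀ X ∈ P, rep X ∈ X := fun X hX =>
    mem_of_mem_inter_right (hrep X hX ▸ mem_singleton_self (rep X))
  obtain ⟨D, hDsub, hDcard, hD, hDw⟩ := hH.exists_isTransversal_image_of_pathMinLeCut hGH hmem
    (hpart.rep_notMem hmem) hX₀ subset_rfl
  rw [insert_erase hX₀, hpart.image_eq_of_inter_eq_singleton hrep] at hD
  refine ⟨D, ⟨hDsub, B, hBind, ?_⟩, ?_, hDw⟩
  · exact SimpleGraph.isTransversal_iff_existsUnique_connectedComponentMk.mp hD
  · rw [hDcard, card_erase_of_mem hX₀, hPcard]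

end GomoryHu

theorem gomory_hu_algorithm_approx_general
    (f : Finset V → ℝ)
    (h_nonneg : ∀ A : Finset V, 0 ≤ f A)
    (h_submod : ∀ A B : Finset V, f (A ∪ B) + f (A ∩ B) ≤ f A + f B)
    (h_symm : ∀ A : Finset V, f A = f (Finset.univ \ A))
    (h_empty_f : f ∅ = 0)
    (H : SimpleGraph V) (hH : H.IsTree)
    (wH : Sym2 V → ℝ)
    (h_weight : ∀ u v : V, H.Adj u v →
      wH s(u, v) = f (compOf (H.deleteEdges ({s(u, v)} : Set (Sym2 V))) u))
    (h_gomory_hu : ∀ a b : V, a ≠ b → ∀ S : Finset V, a ∈ S → b ∉ S →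
      ∀ p : H.Walk a b, p.IsPath → ∃ e ∈ p.edges, wH e ≤ f S)
    (Indep : Finset V → Prop)
    (k : ℕ) (hk : 2 ≤ k)
    (C : Finset (Sym2 V)) (hC : TreeCutIndep Indep H C) (hCcard : C.card = k - 1)
    (h_min : ∀ C' : Finset (Sym2 V), TreeCutIndep Indep H C' → C'.card = k - 1 →
      ∑ e ∈ C, wH e ≤ ∑ e ∈ C', wH e) :
    Feasible Indep k (comps (H.deleteEdges (C : Set (Sym2 V)))) ∧
    ∀ Pstar : Finset (Finset V), Feasible Indep k Pstar →
      ∑ X ∈ comps (H.deleteEdges (C : Set (Sym2 V))), f X ≤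
        (2 - 2 / (k : ℝ)) * ∑ X ∈ Pstar, f X := by
  obtain ⟨hCsub, T, hTind, hT⟩ := hC
  rw [← SimpleGraph.isTransversal_iff_existsUnique_connectedComponentMk] at hT
  have h_univ : f univ = 0 := by rw [h_symm univ, sdiff_self, bot_eq_empty, h_empty_f]
  refine ⟨hT.feasible_comps hTind ?_, fun P hP => ?_⟩
  · rw [← hT.natCard_connectedComponent, hH.natCard_connectedComponent_deleteEdges hCsub]
    omega
  obtain ⟨X₀, hX₀, hmax⟩ := P.exists_max_image f (card_pos.mp (by rw [hP.card_eq]; omega))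
  obtain ⟨D, hD, hDcard, hDw⟩ := hP.exists_treeCutIndep_sum_le hH h_gomory_hu hX₀
  calc ∑ X ∈ comps (H.deleteEdges C), f X ≤ 2 * ∑ e ∈ C, wH e :=
        hH.sum_comps_deleteEdges_le hCsub h_nonneg h_submod h_univ h_weight
    _ ≤ 2 * ∑ X ∈ P.erase X₀, f X := by linarith [h_min D hD hDcard]
    _ ≤ 2 * ((1 - 1 / P.card) * ∑ X ∈ P, f X) := by
        gcongr
        exact sum_erase_le_one_sub_inv_card_mul_sum hX₀ hmax
    _ = (2 - 2 / k) * ∑ X ∈ P, f X := by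
        rw [hP.card_eq]
        ring

/-- the Gomory-Hu tree algorithm is a `(2 - 2/k)`-approximation for
symmetric submodular matroid-constrained partitioning. Here `H` is a Gomory-Hu tree of
the symmetric submodular function `f`: every edge weight equals the `f`-value of one
side of the edge, and for every set `S` separating `a` from `b` the minimum weight on
the `a`–`b` path of `H` is at most `f(S)`. If `C` is a minimum-weight member of `I'` of
size `k - 1`, then the components of `H - C` form a feasible partition whose `f`-value
is at most `(2 - 2/k)` times that of any feasible partition. -/
theorem gomory_hu_algorithm_approx
    (hV : 2 ≤ Fintype.card V)
    (f : Finset V → ℝ)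
    (h_nonneg : ∀ A : Finset V, 0 ≤ f A)
    (h_submod : ∀ A B : Finset V, f (A ∪ B) + f (A ∩ B) ≤ f A + f B)
    (h_symm : ∀ A : Finset V, f A = f (Finset.univ \ A))
    (h_empty_f : f ∅ = 0)
    (H : SimpleGraph V) (hH : H.IsTree)
    (wH : Sym2 V → ℝ)
    (h_weight : ∀ u v : V, H.Adj u v →
      wH s(u, v) = f (compOf (H.deleteEdges ({s(u, v)} : Set (Sym2 V))) u))
    (h_gomory_hu : ∀ a b : V, a ≠ b → ∀ S : Finset V, a ∈ S → b ∉ S →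
      ∀ p : H.Walk a b, p.IsPath → ∃ e ∈ p.edges, wH e ≤ f S)
    (Indep : Finset V → Prop)
    (h_empty : Indep ∅)
    (h_subset : ∀ ⦃I J : Finset V⦄, Indep J → I ⊆ J → Indep I)
    (h_exchange : ∀ ⦃I J : Finset V⦄, Indep I → Indep J → I.card < J.card →
      ∃ e ∈ J \ I, Indep (insert e I))
    (k : ℕ) (hk : 2 ≤ k)
    (h_rank_le : ∀ I : Finset V, Indep I → I.card ≤ k)
    (h_rank_eq : ∃ B : Finset V, Indep B ∧ B.card = k)
    (C : Finset (Sym2 V)) (hC : TreeCutIndep Indep H C) (hCcard : C.card = k - 1)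
    (h_min : ∀ C' : Finset (Sym2 V), TreeCutIndep Indep H C' → C'.card = k - 1 →
      ∑ e ∈ C, wH e ≤ ∑ e ∈ C', wH e) :
    Feasible Indep k (comps (H.deleteEdges (C : Set (Sym2 V)))) ∧
    ∀ Pstar : Finset (Finset V), Feasible Indep k Pstar →
      ∑ X ∈ comps (H.deleteEdges (C : Set (Sym2 V))), f X ≤
        (2 - 2 / (k : ℝ)) * ∑ X ∈ Pstar, f X :=
  gomory_hu_algorithm_approx_general f h_nonneg h_submod h_symm h_empty_f H hH wH h_weight
    h_gomory_hu Indep k hk C hC hCcard h_min
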